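/- arXiv:2308.02183 — 3 statements merged into one kernel-verified Lean document; each statement's English description precedes it below -/
import Mathlib

section
/- Let X = (X, ρ) be a doubling metric space and Ω ⊂ X a proper domain (i.e., X \ Ω ≠ ∅). For all δ, c1, C1, a > 0 satisfying a ≥ 4, 6c1 ≤ C1, 2C1δ ≤ c1 and δ ∈ (0,1), there exists a Dyadic-Whitney decomposition of Ω with data (δ, c1, C1, a). -/
open Metric MeasureTheory Set Filter Topology
open scoped ENNReal NNReal

noncomputable section

/-- The distance between two sets in a metric space. -/
def setDist {X : Type*} [MetricSpace X] (s t : Set X) : ℝ :=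
  sInf (Set.image2 dist s t)

/-- A metric space is doubling if there is `M : ℕ` such that every ball of radius `r`
can be covered by at most `M` balls of radius `r / 2`. -/
def IsDoublingSpace (X : Type*) [MetricSpace X] : Prop :=
  ∃ M : ℕ, ∀ (x : X) (r : ℝ), ∃ s : Finset X, s.card ≤ M ∧
    Metric.ball x r ⊆ ⋃ y ∈ s, Metric.ball y (r / 2)

/-- An open set `Ω` in a metric measure space is Ahlfors `q`-regular with constant `Cq`. -/
def AhlforsRegular {X : Type*} [MetricSpace X] [MeasurableSpace X]
    (ν : Measure X) (Ω : Set X) (q Cq : ℝ) : Prop :=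
  1 ≤ Cq ∧ ∀ x ∈ Ω, ∀ r : ℝ, 0 < r → r < Metric.diam Ω →
    ENNReal.ofReal (Cq⁻¹ * r ^ q) ≤ ν (Metric.ball x r ∩ Ω) ∧
      ν (Metric.ball x r ∩ Ω) ≤ ENNReal.ofReal (Cq * r ^ q)

/-- A gauge function: continuous, increasing on `[0, ∞)` with `h 0 = 0`. -/
def IsGauge (h : ℝ → ℝ) : Prop :=
  ContinuousOn h (Set.Ici 0) ∧ MonotoneOn h (Set.Ici 0) ∧ h 0 = 0

/-- A doubling gauge function. -/
def IsDoublingGauge (h : ℝ → ℝ) : Prop :=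
  IsGauge h ∧ ∃ C : ℝ, ∀ t > 0, h (2 * t) ≤ C * h t

/-- The generalized Hausdorff measure associated with a gauge function `h`. -/
def hausdorffH {X : Type*} [MetricSpace X] [MeasurableSpace X] [BorelSpace X]
    (h : ℝ → ℝ) : Measure X :=
  Measure.mkMetric fun d => ENNReal.ofReal (h d.toReal)

/-- `Ω` is a `φ`-length John domain with center `x0` and constant `c`. -/
def IsPhiLengthJohn {X : Type*} [MetricSpace X] (Ω : Set X) (φ : ℝ → ℝ) (c : ℝ)
    (x0 : X) : Prop :=
  x0 ∈ Ω ∧ ∀ x ∈ Ω, ∃ γ : ℝ → X, ContinuousOn γ (Set.Icc 0 1) ∧ γ 0 = x ∧ γ 1 = x0 ∧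
    Set.MapsTo γ (Set.Icc 0 1) Ω ∧ ∀ t ∈ Set.Icc (0:ℝ) 1,
      eVariationOn γ (Set.Icc 0 t) ≤ ENNReal.ofReal (φ (c * Metric.infDist (γ t) (frontier Ω)))

/-- `γ : (0,1] → Ω` is a `φ`-length John curve (with constant `c`) connecting the boundary
point `ξ` to the center `x0`; i.e. `γ ∈ I^{(φ,c)}(ξ, x0)`. -/
def IsPhiJohnCurveTo {X : Type*} [MetricSpace X] (Ω : Set X) (φ : ℝ → ℝ) (c : ℝ)
    (x0 ξ : X) (γ : ℝ → X) : Prop :=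
  ContinuousOn γ (Set.Ioc 0 1) ∧ γ 1 = x0 ∧ Set.MapsTo γ (Set.Ioc 0 1) Ω ∧
  Filter.Tendsto γ (nhdsWithin 0 (Set.Ioi 0)) (nhds ξ) ∧
  ∀ t ∈ Set.Ioc (0:ℝ) 1,
    eVariationOn γ (Set.Ioc 0 t) ≤ ENNReal.ofReal (φ (c * Metric.infDist (γ t) (frontier Ω)))

/-- `s` is compactly contained in `Ω`. -/
def CptIn {X : Type*} [MetricSpace X] (s Ω : Set X) : Prop :=
  IsCompact (closure s) ∧ closure s ⊆ Ω

/-- The mapping class `𝒜₁(σ)`. -/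
def MemA1 {X Y : Type*} [MetricSpace X] [MeasurableSpace X] [MetricSpace Y]
    (ν : Measure X) (Ω : Set X) (q σ : ℝ) (f : X → Y) : Prop :=
  ∃ (α : X → ℝ) (C : ℝ), IntegrableOn α Ω ν ∧ 1 ≤ C ∧
    ∀ (x : X) (r : ℝ), 0 < r → CptIn (Metric.ball x (σ * r)) Ω →
      EMetric.diam (f '' Metric.ball x r) ≤
        ENNReal.ofReal (C * (∫ y in Metric.ball x (σ * r), α y ∂ν) ^ (1 / q))

/-- The mapping class `𝒜₂(σ)`. -/
def MemA2 {X Y : Type*} [MetricSpace X] [MeasurableSpace X] [MetricSpace Y]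
    (ν : Measure X) (Ω : Set X) (q σ : ℝ) (f : X → Y) : Prop :=
  ∃ (α : X → ℝ) (C : ℝ), IntegrableOn α Ω ν ∧ 1 ≤ C ∧
    ∀ (x : X) (r : ℝ), 0 < r → CptIn (Metric.ball x (σ * r)) Ω →
      EMetric.diam (f '' Metric.ball x r) ≤
        ENNReal.ofReal (C * (∫ y in Metric.ball x (σ * r), α y ∂ν) ^ (1 / q) *
          Real.log (1 / Metric.diam (Metric.ball x r)) ^ (1 / q))

/-- A Dyadic-Whitney decomposition of `Ω` with data `(δ, c1, C1, a)`: a pairwise disjoint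
collection `W` of cubes covering `Ω`, each cube `Q` having a center `ctr Q ∈ Ω` and a
level `lvl Q ∈ ℤ` with `B(ctr Q, c1 δ^k) ⊆ Q ⊆ B(ctr Q, C1 δ^k)` and
`(a-2) C1 δ^k ≤ d(Q, X \ Ω) ≤ a C1 δ^(k-1)` where `k = lvl Q`. -/
structure IsDyadicWhitney {X : Type*} [MetricSpace X] (Ω : Set X) (δ c1 C1 a : ℝ)
    (W : Set (Set X)) (ctr : Set X → X) (lvl : Set X → ℤ) : Prop where
  covers : ⋃₀ W = Ω
  disj : W.Pairwise fun Q Q' => Q ∩ Q' = ∅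
  ctr_mem : ∀ Q ∈ W, ctr Q ∈ Ω
  ball_subset : ∀ Q ∈ W, Metric.ball (ctr Q) (c1 * δ ^ lvl Q) ⊆ Q
  subset_ball : ∀ Q ∈ W, Q ⊆ Metric.ball (ctr Q) (C1 * δ ^ lvl Q)
  dist_lower : ∀ Q ∈ W, (a - 2) * C1 * δ ^ lvl Q ≤ setDist Q Ωᶜ
  dist_upper : ∀ Q ∈ W, setDist Q Ωᶜ ≤ a * C1 * δ ^ (lvl Q - 1)

/-- The shadow `S^{(φ,c)}_E(Q)` of a cube `Q` on a set `E ⊆ ∂Ω`. -/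
def shadowOn {X : Type*} [MetricSpace X] (Ω : Set X) (φ : ℝ → ℝ) (c : ℝ) (x0 : X)
    (E : Set X) (Q : Set X) : Set X :=
  {ξ ∈ E | ∃ γ : ℝ → X, IsPhiJohnCurveTo Ω φ c x0 ξ γ ∧ (Q ∩ γ '' Set.Ioc 0 1).Nonempty}

/-- The discrete length `ℓ_d[f(γ)] = Σ_{Q ∈ W, Q ∩ γ ≠ ∅} diam f(Q)`. -/
def discreteLength {X Y : Type*} [MetricSpace X] [MetricSpace Y]
    (W : Set (Set X)) (f : X → Y) (γ : ℝ → X) : ℝ≥0∞ :=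
  ∑' Q : {Q : Set X // Q ∈ W ∧ ((Q : Set X) ∩ γ '' Set.Ioc 0 1).Nonempty},
    EMetric.diam (f '' (Q : Set X))

/-- `Ω` is a uniform domain with constant `c`. -/
def IsUniformDomain {X : Type*} [MetricSpace X] (Ω : Set X) (c : ℝ) : Prop :=
  ∀ x1 ∈ Ω, ∀ x2 ∈ Ω, ∃ γ : ℝ → X, ContinuousOn γ (Set.Icc 0 1) ∧ γ 0 = x1 ∧ γ 1 = x2 ∧
    Set.MapsTo γ (Set.Icc 0 1) Ω ∧
    eVariationOn γ (Set.Icc 0 1) ≤ ENNReal.ofReal (c * dist x1 x2) ∧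
    ∀ t ∈ Set.Icc (0:ℝ) 1,
      min (eVariationOn γ (Set.Icc 0 t)) (eVariationOn γ (Set.Icc t 1)) ≤
        ENNReal.ofReal (c * Metric.infDist (γ t) (frontier Ω))

/-- The quasihyperbolic distance in `Ω`: the infimum of `∫ ds / d(·, ∂Ω)` over all
arc-length parameterized (`1`-Lipschitz) curves in `Ω` joining `x` to `y`. -/
def qhDist {X : Type*} [MetricSpace X] (Ω : Set X) (x y : X) : ℝ≥0∞ :=
  ⨅ (γ : ℝ → X) (L : ℝ) (_ : 0 ≤ L) (_ : γ 0 = x) (_ : γ L = y)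
    (_ : LipschitzOnWith 1 γ (Set.Icc 0 L)) (_ : Set.MapsTo γ (Set.Icc 0 L) Ω),
    ∫⁻ s in Set.Icc (0:ℝ) L, ENNReal.ofReal (1 / Metric.infDist (γ s) (frontier Ω))


private lemma exists_maximal_net' {X : Type*} [MetricSpace X] (A : Set X) (r : ℝ) (hr : 0 < r) :
    ∃ N : Set X, N ⊆ A ∧ (N.Pairwise fun x y => r ≤ dist x y) ∧
      ∀ z ∈ A, ∃ y ∈ N, dist z y < r := by
  have hz : ∀ c ⊆ {N : Set X | N ⊆ A ∧ N.Pairwise fun x y => r ≤ dist x y},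
      IsChain (· ⊆ ·) c → ∃ ub ∈ {N : Set X | N ⊆ A ∧ N.Pairwise fun x y => r ≤ dist x y},
        ∀ s ∈ c, s ⊆ ub := by
    intro c hcS hchain
    refine ⟨⋃₀ c, ⟨Set.sUnion_subset fun s hs => (hcS hs).1, ?_⟩,
      fun s hs => Set.subset_sUnion_of_mem hs⟩
    intro x hx y hy hxy
    obtain ⟨s, hs, hxs⟩ := hx
    obtain ⟨t, ht, hyt⟩ := hy
    rcases eq_or_ne s t with rfl | hst
    · exact (hcS hs).2 hxs hyt hxy
    rcases hchain hs ht hst with h | h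
    · exact (hcS ht).2 (h hxs) hyt hxy
    · exact (hcS hs).2 hxs (h hyt) hxy
  obtain ⟨N, hN⟩ := zorn_subset _ hz
  refine ⟨N, hN.prop.1, hN.prop.2, ?_⟩
  intro z hzA
  by_cases hzN : z ∈ N
  · exact ⟨z, hzN, by simpa using hr⟩
  by_contra hcon
  push_neg at hcon
  have hins : insert z N ∈ {N : Set X | N ⊆ A ∧ N.Pairwise fun x y => r ≤ dist x y} := by
    constructor
    · exact Set.insert_subset hzA hN.prop.1
    · rw [Set.pairwise_insert]
      exact ⟨hN.prop.2, fun b hb _ => ⟨hcon b hb, by rw [dist_comm]; exact hcon b hb⟩⟩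
  have := hN.2 hins (Set.subset_insert z N)
  exact hzN (this (Set.mem_insert z N))

private lemma exists_zpow_lt' {δ : ℝ} (hδ1 : δ < 1) (ε : ℝ) (hε : 0 < ε) :
    ∃ m : ℤ, δ ^ m < ε := by
  obtain ⟨n, hn⟩ := exists_pow_lt_of_lt_one hε hδ1
  exact ⟨n, by rwa [zpow_natCast]⟩

set_option maxHeartbeats 1000000 in
/-- Existence of a Dyadic-Whitney decomposition of a proper domain in a
doubling metric space. -/
theorem statement3
    {X : Type*} [MetricSpace X] (hX : IsDoublingSpace X)
    (Ω : Set X) (hΩopen : IsOpen Ω) (hΩconn : IsConnected Ω) (hΩproper : Ωᶜ.Nonempty)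
    (δ c1 C1 a : ℝ) (hδ0 : 0 < δ) (hδ1 : δ < 1) (hc1 : 0 < c1) (hC1 : 0 < C1)
    (ha : 4 ≤ a) (h6 : 6 * c1 ≤ C1) (h2 : 2 * C1 * δ ≤ c1) :
    ∃ (W : Set (Set X)) (ctr : Set X → X) (lvl : Set X → ℤ),
      IsDyadicWhitney Ω δ c1 C1 a W ctr lvl := by
  classical
  obtain ⟨z0, hz0⟩ := hΩproper
  have hδ12 : δ ≤ 1 / 12 := by nlinarith
  set ρ : X → ℝ := fun z => Metric.infDist z Ωᶜ with hρdef
  have hρpos : ∀ z ∈ Ω, 0 < ρ z := by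
    intro z hzΩ
    exact (hΩopen.isClosed_compl.notMem_iff_infDist_pos ⟨z0, hz0⟩).1 (by simpa using hzΩ)
  have hρLip : ∀ x y : X, ρ x ≤ ρ y + dist x y := fun x y =>
    Metric.infDist_le_infDist_add_dist
  have hρle_dist : ∀ z : X, ∀ w ∈ Ωᶜ, ρ z ≤ dist z w := fun z w hw =>
    Metric.infDist_le_dist_of_mem hw
  set b : ℝ := (a - 1) * C1 with hbdef
  have hb : 18 * c1 ≤ b := by nlinarith
  have hbpos : 0 < b := by nlinarith
  have ebδ : b * δ ≤ b / 12 := by nlinarith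
  have ec1δ : c1 * δ ≤ c1 / 12 := by nlinarith
  have ec1δδ : c1 * δ * δ ≤ c1 * δ := by nlinarith
  have hdpos : ∀ m : ℤ, 0 < δ ^ m := fun m => zpow_pos hδ0 m
  have hdmono : ∀ {m n : ℤ}, m ≤ n → δ ^ n ≤ δ ^ m := fun {m n} h =>
    zpow_le_zpow_right_of_le_one₀ hδ0 hδ1.le h
  have hdsucc : ∀ m : ℤ, δ ^ (m + 1) = δ ^ m * δ := fun m => zpow_add_one₀ (ne_of_gt hδ0) m
  have hdpred : ∀ m : ℤ, δ ^ m = δ ^ (m - 1) * δ := fun m => by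
    rw [← hdsucc (m - 1)]; norm_num
  -- the level function
  have hlevex : ∀ z : X, ∃ m : ℤ, z ∈ Ω → b * δ ^ m ≤ ρ z ∧ ρ z < b * δ ^ (m - 1) := by
    intro z
    by_cases hzΩ : z ∈ Ω
    swap
    · exact ⟨0, fun h => absurd h hzΩ⟩
    have hρz := hρpos z hzΩ
    obtain ⟨m1, hm1⟩ := exists_zpow_lt' hδ1 (ρ z / b) (div_pos hρz hbpos)
    obtain ⟨m2, hm2⟩ := exists_zpow_lt' hδ1 (b / ρ z) (div_pos hbpos hρz)
    have Hinh : ∃ m : ℤ, b * δ ^ m ≤ ρ z := by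
      refine ⟨m1, ?_⟩
      have := (lt_div_iff₀' hbpos).1 hm1
      linarith
    have Hbdd : ∃ lb : ℤ, ∀ m : ℤ, b * δ ^ m ≤ ρ z → lb ≤ m := by
      refine ⟨-m2, ?_⟩
      intro m hm
      by_contra hcon
      push_neg at hcon
      have h1 : δ ^ (-m2) ≤ δ ^ m := hdmono hcon.le
      have h2 : b * δ ^ (-m2) ≤ ρ z :=
        le_trans (mul_le_mul_of_nonneg_left h1 hbpos.le) hm
      have h3 : δ ^ m2 * ρ z < b := (lt_div_iff₀ hρz).1 hm2
      have h4 : δ ^ (-m2) * δ ^ m2 = 1 := by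
        rw [← zpow_add₀ (ne_of_gt hδ0)]; simp
      have h5 := mul_le_mul_of_nonneg_right h2 (hdpos m2).le
      rw [mul_assoc, h4, mul_one] at h5
      rw [mul_comm] at h3
      linarith
    obtain ⟨lb, hPlb, hleast⟩ := Int.exists_least_of_bdd Hbdd Hinh
    refine ⟨lb, fun _ => ⟨hPlb, ?_⟩⟩
    by_contra hcon
    push_neg at hcon
    have := hleast (lb - 1) hcon
    omega
  choose klvl hklvl using hlevex
  have hk1 : ∀ z ∈ Ω, b * δ ^ klvl z ≤ ρ z := fun z hz => (hklvl z hz).1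
  have hk2 : ∀ z ∈ Ω, ρ z < b * δ ^ (klvl z - 1) := fun z hz => (hklvl z hz).2
  -- maximal nets in each layer
  have hnets : ∀ k : ℤ, ∃ N : Set X, N ⊆ {z | z ∈ Ω ∧ klvl z = k} ∧
      (N.Pairwise fun x y => 2 * c1 * δ ^ k ≤ dist x y) ∧
      ∀ z ∈ {z | z ∈ Ω ∧ klvl z = k}, ∃ y ∈ N, dist z y < 2 * c1 * δ ^ k := fun k =>
    exists_maximal_net' _ _ (mul_pos (by linarith) (hdpos k))
  choose N hNsub hNsep hNcov using hnets
  have hNΩ : ∀ k : ℤ, ∀ y ∈ N k, y ∈ Ω := fun k y hy => (hNsub k hy).1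
  have hNk : ∀ k : ℤ, ∀ y ∈ N k, klvl y = k := fun k y hy => (hNsub k hy).2
  -- pruned set of centers
  set M : Set X := {y | (∃ k, y ∈ N k) ∧
    ¬ ∃ y' ∈ N (klvl y - 1), dist y y' < (c1 + 4 * c1 * δ) * δ ^ (klvl y - 1)} with hMdef
  have hM_iff : ∀ y : X, y ∈ M ↔ (∃ k, y ∈ N k) ∧
      ¬ ∃ y' ∈ N (klvl y - 1), dist y y' < (c1 + 4 * c1 * δ) * δ ^ (klvl y - 1) := by
    intro y
    rw [hMdef]
    exact Iff.rfl
  have hMmem : ∀ y ∈ M, y ∈ N (klvl y) := by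
    intro y hy
    obtain ⟨⟨k, hk⟩, -⟩ := (hM_iff y).1 hy
    rw [hNk k y hk]
    exact hk
  have hMΩ : ∀ y ∈ M, y ∈ Ω := fun y hy => hNΩ _ y (hMmem y hy)
  -- candidate centers of a point
  set cand : X → Set X := fun z => {y | y ∈ M ∧ dist z y < 4 * c1 * δ ^ klvl y} with hcdef
  have hcand_mem : ∀ z y : X, y ∈ cand z ↔ y ∈ M ∧ dist z y < 4 * c1 * δ ^ klvl y := by
    intro z y
    rw [hcdef]
    exact Iff.rfl
  -- every point of Ω has a candidate
  have hcand_ne : ∀ z ∈ Ω, ∃ y, y ∈ cand z := by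
    intro z hzΩ
    obtain ⟨y, hyN, hyd⟩ := hNcov (klvl z) z ⟨hzΩ, rfl⟩
    have hyk : klvl y = klvl z := hNk _ y hyN
    have hyΩ : y ∈ Ω := hNΩ _ y hyN
    by_cases hdel : ∃ y' ∈ N (klvl y - 1), dist y y' < (c1 + 4 * c1 * δ) * δ ^ (klvl y - 1)
    · obtain ⟨y', hy'N, hy'd⟩ := hdel
      have hy'k : klvl y' = klvl y - 1 := hNk _ y' hy'N
      have hy'Ω : y' ∈ Ω := hNΩ _ y' hy'N
      have hy'M : y' ∈ M := by
        rw [hM_iff]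
        refine ⟨⟨klvl y - 1, hy'N⟩, ?_⟩
        rintro ⟨y'', hy''N, hy''d⟩
        rw [hy'k] at hy''N hy''d
        have hy''k : klvl y'' = klvl y - 1 - 1 := hNk _ y'' hy''N
        have hy''Ω : y'' ∈ Ω := hNΩ _ y'' hy''N
        have h1 : b * δ ^ (klvl y - 1 - 1) ≤ ρ y'' := by
          have := hk1 y'' hy''Ω; rwa [hy''k] at this
        have h2 : ρ y'' ≤ ρ y + (dist y y' + dist y' y'') := by
          have ht := dist_triangle y y' y''
          have h := hρLip y'' y
          rw [dist_comm y'' y] at h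
          linarith
        have h3 : ρ y < b * δ ^ (klvl y - 1) := hk2 y hyΩ
        have hu : δ ^ (klvl y - 1) = δ ^ (klvl y - 1 - 1) * δ := hdpred _
        rw [hu] at hy'd h3
        have hlt : b * δ ^ (klvl y - 1 - 1) <
            (b * δ + (c1 + 4 * c1 * δ) * δ + (c1 + 4 * c1 * δ)) * δ ^ (klvl y - 1 - 1) := by
          nlinarith
        have hsc : b < b * δ + (c1 + 4 * c1 * δ) * δ + (c1 + 4 * c1 * δ) :=
          lt_of_mul_lt_mul_right hlt (hdpos _).le
        nlinarith
      refine ⟨y', ?_⟩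
      rw [hcand_mem]
      refine ⟨hy'M, ?_⟩
      have ht := dist_triangle z y y'
      have h8 : δ ^ klvl z = δ ^ klvl y' * δ := by
        rw [show klvl y' = klvl z - 1 by omega]
        exact hdpred _
      have h9 : δ ^ (klvl y - 1) = δ ^ klvl y' := by rw [hy'k]
      rw [h9] at hy'd
      rw [h8] at hyd
      have hkey : c1 * δ * δ ^ klvl y' ≤ c1 / 12 * δ ^ klvl y' :=
        mul_le_mul_of_nonneg_right ec1δ (hdpos (klvl y')).le
      nlinarith [hdpos (klvl y'), mul_pos hc1 (hdpos (klvl y'))]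
    · refine ⟨y, ?_⟩
      rw [hcand_mem]
      refine ⟨?_, ?_⟩
      · rw [hM_iff]
        exact ⟨⟨klvl z, hyN⟩, hdel⟩
      · rw [hyk]
        nlinarith [mul_pos hc1 (hdpos (klvl z))]
  -- the finest candidate level
  have hkmex : ∀ z : X, ∃ m : ℤ, z ∈ Ω →
      (∃ y ∈ cand z, klvl y = m) ∧ ∀ y ∈ cand z, klvl y ≤ m := by
    intro z
    by_cases hzΩ : z ∈ Ω
    swap
    · exact ⟨0, fun h => absurd h hzΩ⟩
    obtain ⟨y0, hy0⟩ := hcand_ne z hzΩ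
    obtain ⟨m0, hm0⟩ := exists_zpow_lt' hδ1 (ρ z / (b + 4 * c1))
      (div_pos (hρpos z hzΩ) (by linarith))
    have hbdd : ∀ y ∈ cand z, klvl y ≤ m0 := by
      intro y hy
      obtain ⟨hyM, hyd⟩ := (hcand_mem z y).1 hy
      have hyΩ := hMΩ y hyM
      have h1 : ρ z ≤ ρ y + dist z y := hρLip z y
      have h2 : ρ y < b * δ ^ (klvl y - 1) := hk2 y hyΩ
      have h3 : δ ^ klvl y ≤ δ ^ (klvl y - 1) := hdmono (by omega)
      have h4 : ρ z < (b + 4 * c1) * δ ^ (klvl y - 1) := by nlinarith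
      by_contra hcon
      push_neg at hcon
      have h5 : δ ^ (klvl y - 1) ≤ δ ^ m0 := hdmono (by omega)
      have h6 : δ ^ m0 * (b + 4 * c1) < ρ z := (lt_div_iff₀ (by linarith)).1 hm0
      nlinarith [hdpos (klvl y - 1)]
    obtain ⟨ub, hPub, hgreatest⟩ := Int.exists_greatest_of_bdd
      (P := fun m => ∃ y ∈ cand z, klvl y = m)
      ⟨m0, fun m hm => by obtain ⟨y, hy, hk⟩ := hm; exact hk ▸ hbdd y hy⟩
      ⟨klvl y0, y0, hy0, rfl⟩
    exact ⟨ub, fun _ => ⟨hPub, fun y hy => hgreatest (klvl y) ⟨y, hy, rfl⟩⟩⟩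
  choose km hkm using hkmex
  -- the assignment map
  set φ : X → X := fun z =>
    if h : ∃ y, (y ∈ cand z ∧ klvl y = km z) ∧ dist z y < c1 * δ ^ km z then h.choose
    else if h2 : ∃ y, y ∈ cand z ∧ klvl y = km z then h2.choose else z with hφdef
  have hφcand : ∀ z ∈ Ω, φ z ∈ cand z := by
    intro z hzΩ
    by_cases h : ∃ y, (y ∈ cand z ∧ klvl y = km z) ∧ dist z y < c1 * δ ^ km z
    · have hφz : φ z = h.choose := by simp only [hφdef]; rw [dif_pos h]
      rw [hφz]; exact h.choose_spec.1.1
    · have h2 : ∃ y, y ∈ cand z ∧ klvl y = km z := (hkm z hzΩ).1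
      have hφz : φ z = h2.choose := by simp only [hφdef]; rw [dif_neg h, dif_pos h2]
      rw [hφz]; exact h2.choose_spec.1
  -- inner balls are assigned to their own center
  have hφball : ∀ y ∈ M, ∀ w : X, dist w y < c1 * δ ^ klvl y → w ∈ Ω ∧ φ w = y := by
    intro y hyM w hwd
    have hyΩ := hMΩ y hyM
    have hyk : b * δ ^ klvl y ≤ ρ y := hk1 y hyΩ
    have hwΩ : w ∈ Ω := by
      by_contra hwO
      have h1 : ρ y ≤ dist y w := hρle_dist y w (by simpa using hwO)
      rw [dist_comm] at h1
      nlinarith [mul_pos hc1 (hdpos (klvl y)), mul_pos hbpos (hdpos (klvl y))]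
    have hycand : y ∈ cand w := by
      rw [hcand_mem]
      exact ⟨hyM, by nlinarith [mul_pos hc1 (hdpos (klvl y))]⟩
    have hlevmax : ∀ y' ∈ cand w, klvl y' ≤ klvl y := by
      intro y' hy'
      obtain ⟨hy'M, hy'd⟩ := (hcand_mem w y').1 hy'
      by_contra hcon
      push_neg at hcon
      have hy'Ω := hMΩ y' hy'M
      rcases eq_or_lt_of_le (by omega : klvl y + 1 ≤ klvl y') with heq | hlt
      · have hNy : y ∈ N (klvl y' - 1) := by
          have h := hMmem y hyM
          rw [show (klvl y' - 1 : ℤ) = klvl y by omega]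
          exact h
        refine ((hM_iff y').1 hy'M).2 ⟨y, hNy, ?_⟩
        have ht := dist_triangle y' w y
        rw [dist_comm y' w] at ht
        have h3 : δ ^ klvl y' = δ ^ klvl y * δ := by
          rw [show klvl y' = klvl y + 1 by omega]
          exact hdsucc _
        rw [show (klvl y' - 1 : ℤ) = klvl y by omega]
        rw [h3] at hy'd
        linarith
      · have h1 : ρ y ≤ ρ y' + dist y y' := hρLip y y'
        have h2 : ρ y' < b * δ ^ (klvl y' - 1) := hk2 y' hy'Ω
        have h6 : δ ^ (klvl y + 1) = δ ^ klvl y * δ := hdsucc _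
        have h4 : δ ^ (klvl y' - 1) ≤ δ ^ klvl y * δ := by
          rw [← h6]; exact hdmono (by omega)
        have h5 : δ ^ klvl y' ≤ δ ^ klvl y * δ := by
          rw [← h6]; exact hdmono (by omega)
        have ht := dist_triangle y w y'
        rw [dist_comm y w] at ht
        have h7 : b * δ ^ (klvl y' - 1) ≤ b * (δ ^ klvl y * δ) :=
          mul_le_mul_of_nonneg_left h4 hbpos.le
        have h8 : 4 * c1 * δ ^ klvl y' ≤ 4 * c1 * (δ ^ klvl y * δ) :=
          mul_le_mul_of_nonneg_left h5 (by linarith)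
        have hlt : b * δ ^ klvl y <
            (b * δ + c1 + 4 * c1 * δ) * δ ^ klvl y := by nlinarith
        have hsc : b < b * δ + c1 + 4 * c1 * δ :=
          lt_of_mul_lt_mul_right hlt (hdpos _).le
        nlinarith
    have hkmw : km w = klvl y := by
      obtain ⟨y1, hy1c, hy1k⟩ := (hkm w hwΩ).1
      have h1 : km w ≤ klvl y := hy1k ▸ hlevmax y1 hy1c
      have h2 : klvl y ≤ km w := (hkm w hwΩ).2 y hycand
      omega
    have hex : ∃ y', (y' ∈ cand w ∧ klvl y' = km w) ∧ dist w y' < c1 * δ ^ km w :=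
      ⟨y, ⟨hycand, hkmw.symm⟩, by rw [hkmw]; exact hwd⟩
    have hφw : φ w = hex.choose := by simp only [hφdef]; rw [dif_pos hex]
    have hy2c : hex.choose ∈ cand w := hex.choose_spec.1.1
    have hy2k : klvl hex.choose = km w := hex.choose_spec.1.2
    have hy2d : dist w hex.choose < c1 * δ ^ km w := hex.choose_spec.2
    have hcast : ∀ (u : X) (k k' : ℤ), k = k' → u ∈ N k → u ∈ N k' :=
      fun u k k' e h => e ▸ h
    have hy2N : hex.choose ∈ N (klvl y) :=
      hcast _ _ _ (hy2k.trans hkmw) (hMmem _ ((hcand_mem w hex.choose).1 hy2c).1)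
    have hyN : y ∈ N (klvl y) := hMmem y hyM
    have hchoose_eq : hex.choose = y := by
      by_contra hne
      have hsep := hNsep (klvl y) hy2N hyN hne
      have hd2 : dist w hex.choose < c1 * δ ^ klvl y :=
        lt_of_lt_of_eq hy2d (by rw [hkmw])
      have ht := dist_triangle hex.choose w y
      rw [dist_comm hex.choose w] at ht
      linarith
    exact ⟨hwΩ, by rw [hφw, hchoose_eq]⟩
  -- the cubes
  set Qs : X → Set X := fun y => {z | z ∈ Ω ∧ φ z = y} with hQdef
  have hQs_mem : ∀ y z : X, z ∈ Qs y ↔ z ∈ Ω ∧ φ z = y := by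
    intro y z
    rw [hQdef]
    exact Iff.rfl
  set W : Set (Set X) := {Q | ∃ y ∈ M, Q = Qs y} with hWdef
  have hW_mem : ∀ Q : Set X, Q ∈ W ↔ ∃ y ∈ M, Q = Qs y := by
    intro Q
    rw [hWdef]
    exact Iff.rfl
  set ctr : Set X → X := fun Q => if h : ∃ y ∈ M, Q = Qs y then h.choose else z0 with hctrdef
  have hWc : ∀ Q ∈ W, ctr Q ∈ M ∧ Q = Qs (ctr Q) := by
    intro Q hQ
    have hQ' : ∃ y ∈ M, Q = Qs y := (hW_mem Q).1 hQ
    have hc : ctr Q = hQ'.choose := by simp only [hctrdef]; rw [dif_pos hQ']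
    rw [hc]
    exact ⟨hQ'.choose_spec.1, hQ'.choose_spec.2⟩
  have hself : ∀ y ∈ M, y ∈ Qs y := by
    intro y hyM
    have h := hφball y hyM y (by
      rw [dist_self]
      exact mul_pos hc1 (hdpos (klvl y)))
    rw [hQs_mem]
    exact ⟨h.1, h.2⟩
  have hQsub : ∀ y ∈ M, ∀ z ∈ Qs y, z ∈ Ω ∧ dist z y < 4 * c1 * δ ^ klvl y := by
    intro y hyM z hz
    obtain ⟨hzΩ, hzφ⟩ := (hQs_mem y z).1 hz
    have h := (hcand_mem z (φ z)).1 (hφcand z hzΩ)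
    rw [hzφ] at h
    exact ⟨hzΩ, h.2⟩
  refine ⟨W, ctr, fun Q => klvl (ctr Q), ?_⟩
  constructor
  -- covers
  · ext x
    constructor
    · rintro ⟨Q, hQW, hxQ⟩
      have h := (hWc Q hQW).2
      rw [h] at hxQ
      exact ((hQs_mem _ x).1 hxQ).1
    · intro hx
      have hφM : φ x ∈ M := ((hcand_mem x (φ x)).1 (hφcand x hx)).1
      refine ⟨Qs (φ x), (hW_mem _).2 ⟨φ x, hφM, rfl⟩, (hQs_mem _ x).2 ⟨hx, rfl⟩⟩
  -- disjoint
  · intro Q hQ Q' hQ' hne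
    rw [Set.eq_empty_iff_forall_notMem]
    rintro x ⟨hxQ, hxQ'⟩
    have h1 := (hWc Q hQ).2
    have h2 := (hWc Q' hQ').2
    rw [h1] at hxQ
    rw [h2] at hxQ'
    have e1 := ((hQs_mem _ x).1 hxQ).2
    have e2 := ((hQs_mem _ x).1 hxQ').2
    exact hne (by rw [h1, h2, ← e1, ← e2])
  -- ctr_mem
  · intro Q hQ
    exact hMΩ _ (hWc Q hQ).1
  -- ball_subset
  · intro Q hQ x hx
    rw [Metric.mem_ball] at hx
    have h := hφball (ctr Q) (hWc Q hQ).1 x hx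
    rw [(hWc Q hQ).2]
    exact (hQs_mem _ x).2 ⟨h.1, h.2⟩
  -- subset_ball
  · intro Q hQ z hz
    rw [(hWc Q hQ).2] at hz
    obtain ⟨hzΩ, hzd⟩ := hQsub _ (hWc Q hQ).1 z hz
    rw [Metric.mem_ball]
    nlinarith [hdpos (klvl (ctr Q)), mul_pos hc1 (hdpos (klvl (ctr Q)))]
  -- dist_lower
  · intro Q hQ
    obtain ⟨hcM, hcQ⟩ := hWc Q hQ
    simp only [setDist]
    apply le_csInf
    · refine ⟨dist (ctr Q) z0, Set.mem_image2_of_mem ?_ hz0⟩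
      have h := hself _ hcM
      rwa [← hcQ] at h
    · intro p hp
      rw [Set.mem_image2] at hp
      obtain ⟨z, hz, w, hw, rfl⟩ := hp
      rw [hcQ] at hz
      obtain ⟨hzΩ, hzd⟩ := hQsub _ hcM z hz
      have h1 : ρ z ≤ dist z w := hρle_dist z w hw
      have h2 : ρ (ctr Q) ≤ ρ z + dist (ctr Q) z := hρLip (ctr Q) z
      rw [dist_comm (ctr Q) z] at h2
      have h3 : b * δ ^ klvl (ctr Q) ≤ ρ (ctr Q) := hk1 _ (hMΩ _ hcM)
      have h4 : 0 < δ ^ klvl (ctr Q) := hdpos _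
      nlinarith
  -- dist_upper
  · intro Q hQ
    obtain ⟨hcM, hcQ⟩ := hWc Q hQ
    have h1 : ρ (ctr Q) < b * δ ^ (klvl (ctr Q) - 1) := hk2 _ (hMΩ _ hcM)
    have h2 : b * δ ^ (klvl (ctr Q) - 1) < a * C1 * δ ^ (klvl (ctr Q) - 1) := by
      have h3 := hdpos (klvl (ctr Q) - 1)
      nlinarith
    have h3 : Metric.infDist (ctr Q) Ωᶜ < a * C1 * δ ^ (klvl (ctr Q) - 1) := lt_trans h1 h2
    obtain ⟨w, hw, hwd⟩ := (Metric.infDist_lt_iff ⟨z0, hz0⟩).1 h3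
    simp only [setDist]
    refine le_trans (csInf_le ?_ ?_) hwd.le
    · refine ⟨0, ?_⟩
      rintro p hp
      rw [Set.mem_image2] at hp
      obtain ⟨x, -, v, -, rfl⟩ := hp
      exact dist_nonneg
    · refine Set.mem_image2_of_mem ?_ hw
      have h := hself _ hcM
      rwa [← hcQ] at h
end
end

section
/- Let Ω be a domain in a metric space X1 and let X2 be a complete metric space satisfying condition (P): for any two points y1, y2 ∈ X2 and any ball B(y2, δ) ⊂ X2, there exists y2' ∈ B(y2, δ) such that d(y2', y1) > d(y2, y1). If f : Ω → X2 is a continuous open mapping, then for every ball B with closure compactly contained in Ω, diam f(closure of B) ≤ diam f(∂B); in particular diam f(B) ≤ diam f(∂B). -/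
open Metric MeasureTheory Set Filter Topology
open scoped ENNReal NNReal

noncomputable section

/-- For a continuous open map into a complete metric space satisfying
condition (P), the diameter of the image of a closed ball compactly contained in the
domain is controlled by the diameter of the image of its boundary sphere. -/
theorem statement6
    {X1 : Type*} [MetricSpace X1] {X2 : Type*} [MetricSpace X2] [CompleteSpace X2]
    (hP : ∀ (y1 y2 : X2) (δ : ℝ), 0 < δ →
      ∃ y2' ∈ Metric.ball y2 δ, dist y2 y1 < dist y2' y1)
    (Ω : Set X1) (hΩopen : IsOpen Ω) (hΩconn : IsConnected Ω)
    (f : X1 → X2) (hfcont : ContinuousOn f Ω)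
    (hfopen : ∀ U ⊆ Ω, IsOpen U → IsOpen (f '' U))
    (x : X1) (r : ℝ) (hr : 0 < r) (hcc : CptIn (Metric.ball x r) Ω) :
    EMetric.diam (f '' closure (Metric.ball x r)) ≤
        EMetric.diam (f '' frontier (Metric.ball x r)) ∧
      EMetric.diam (f '' Metric.ball x r) ≤
        EMetric.diam (f '' frontier (Metric.ball x r)) := by
  set B := Metric.ball x r with hB
  have hBopen : IsOpen B := Metric.isOpen_ball
  have hK : IsCompact (closure B) := hcc.1
  have hKΩ : closure B ⊆ Ω := hcc.2
  have hBΩ : B ⊆ Ω := subset_closure.trans hKΩ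
  have hfB : IsOpen (f '' B) := hfopen B hBΩ hBopen
  have hfK : ContinuousOn f (closure B) := hfcont.mono hKΩ
  have hfront : frontier B = closure B \ B := hBopen.frontier_eq
  have key : ∀ y1 : X2, ∀ z ∈ closure B, ∃ w ∈ frontier B,
      dist (f z) y1 ≤ dist (f w) y1 := by
    intro y1 z hz
    obtain ⟨z0, hz0K, hz0max⟩ := hK.exists_isMaxOn ⟨z, hz⟩
      (continuous_dist.comp_continuousOn (hfK.prodMk continuousOn_const))
    have hz0f : z0 ∈ frontier B := by
      rw [hfront]
      refine ⟨hz0K, fun hz0B => ?_⟩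
      obtain ⟨δ, hδ, hball⟩ := Metric.isOpen_iff.1 hfB (f z0) ⟨z0, hz0B, rfl⟩
      obtain ⟨y2', hy2'mem, hy2'lt⟩ := hP y1 (f z0) δ hδ
      obtain ⟨z', hz'B, rfl⟩ := hball hy2'mem
      exact absurd (hz0max (subset_closure hz'B)) (not_le.2 hy2'lt)
    exact ⟨z0, hz0f, hz0max hz⟩
  have hd1 : EMetric.diam (f '' closure B) ≤ EMetric.diam (f '' frontier B) := by
    refine EMetric.diam_le ?_
    rintro _ ⟨z1, hz1, rfl⟩ _ ⟨z2, hz2, rfl⟩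
    obtain ⟨w, hw, hw1⟩ := key (f z2) z1 hz1
    obtain ⟨w', hw', hw2⟩ := key (f w) z2 hz2
    have : dist (f z1) (f z2) ≤ dist (f w') (f w) := by
      calc dist (f z1) (f z2) ≤ dist (f w) (f z2) := hw1
        _ = dist (f z2) (f w) := dist_comm _ _
        _ ≤ dist (f w') (f w) := hw2
    calc edist (f z1) (f z2) = ENNReal.ofReal (dist (f z1) (f z2)) := edist_dist _ _
      _ ≤ ENNReal.ofReal (dist (f w') (f w)) := ENNReal.ofReal_le_ofReal this
      _ = edist (f w') (f w) := (edist_dist _ _).symm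
      _ ≤ EMetric.diam (f '' frontier B) :=
          EMetric.edist_le_diam_of_mem ⟨w', hw', rfl⟩ ⟨w, hw, rfl⟩
  exact ⟨hd1, le_trans (EMetric.diam_mono (Set.image_mono subset_closure)) hd1⟩
end
end

section
/- Let X = (X, ρ) be a doubling metric space and assume there are constants 0 < c0 ≤ C0 < ∞ and δ ∈ (0,1) with 12 C0 δ ≤ c0. Given points {z_α^k}, α ∈ A_k, k ∈ ℤ, satisfying ρ(z_α^k, z_β^k) ≥ c0 δ^k for α ≠ β and min_α ρ(x, z_α^k) < C0 δ^k for all x ∈ X, there exists a family of sets Q_α^k (half-open dyadic cubes) such that: (1) for every k ∈ ℤ, X is the disjoint union of the Q_α^k over α; (2) if l ≥ k, then either Q_β^l ⊆ Q_α^k or Q_α^k ∩ Q_β^l = ∅; (3) B(z_α^k, c1 δ^k) ⊆ Q_α^k ⊆ B(z_α^k, C1 δ^k), where c1 = c0/3 and C1 = 2C0. -/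
open Metric MeasureTheory Set Filter Topology
open scoped ENNReal NNReal

noncomputable section

open scoped Classical

namespace HK

lemma cover_iter {X : Type*} [MetricSpace X] (hX : IsDoublingSpace X) :
    ∀ (n : ℕ) (x : X) (r : ℝ), ∃ t : Finset X,
      Metric.ball x r ⊆ ⋃ y ∈ t, Metric.ball y (r / 2 ^ n) := by
  classical
  obtain ⟨M, hM⟩ := hX
  intro n
  induction n with
  | zero => intro x r; exact ⟨{x}, by simp⟩
  | succ n ih =>
    intro x r
    obtain ⟨s, -, hs⟩ := hM x r
    choose t ht using fun y : X => ih y (r / 2)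
    refine ⟨s.biUnion t, ?_⟩
    intro p hp
    obtain ⟨y, hy, hyp⟩ := by simpa using hs hp
    have := ht y hyp
    obtain ⟨w, hw, hwp⟩ := by simpa using this
    simp only [Finset.mem_biUnion, mem_iUnion, exists_prop]
    refine ⟨w, ⟨y, hy, hw⟩, ?_⟩
    have : r / 2 / 2 ^ n = r / 2 ^ (n + 1) := by
      rw [div_div, ← pow_succ']
    rwa [this] at hwp

lemma finite_separated {X : Type*} [MetricSpace X] (hX : IsDoublingSpace X)
    {R : ℝ} (hR : 0 < R) (x : X) (r : ℝ) (s : Set X) (hs : s ⊆ Metric.ball x r)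
    (hsep : s.Pairwise fun a b => R ≤ dist a b) : s.Finite := by
  rcases le_or_gt r 0 with hr | hr
  · have : s ⊆ ∅ := by rwa [ball_eq_empty.mpr hr] at hs
    exact Set.Finite.subset (Set.finite_empty) this
  · -- choose n with r / 2^n < R / 2
    obtain ⟨n, hn⟩ := exists_nat_gt (2 * r / R)
    have h2n : (n : ℝ) < 2 ^ n := by exact_mod_cast Nat.lt_two_pow_self
    have hpow : (0:ℝ) < 2 ^ n := by positivity
    have hsmall : r / 2 ^ n < R / 2 := by
      rw [div_lt_div_iff₀ hpow two_pos]
      have h1 : 2 * r / R < 2 ^ n := lt_trans hn h2n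
      rw [div_lt_iff₀ hR] at h1
      linarith
    obtain ⟨t, ht⟩ := cover_iter hX n x r
    choose f hf hf2 using fun a : s => by
      have := ht (hs a.2)
      simpa using this
    have hinj : Function.Injective f := by
      intro a b hab
      have h1 := hf2 a
      have h2 := hf2 b
      rw [hab] at h1
      have hd : dist (a : X) (b : X) < R := by
        calc dist (a : X) (b : X) ≤ dist (a : X) (f b) + dist (f b) (b : X) := dist_triangle _ _ _
        _ < r / 2 ^ n + r / 2 ^ n := by
            rw [dist_comm (f b) (b : X)]; exact add_lt_add h1 h2
        _ < R := by linarith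
      by_contra hne
      have hne' : (a : X) ≠ (b : X) := fun h => hne (Subtype.ext h)
      exact absurd (hsep a.2 b.2 hne') (not_le.mpr hd)
    have : Finite s := Finite.of_injective (fun a : s => (⟨f a, hf a⟩ : {y // y ∈ t}))
      (fun a b hab => hinj (congrArg Subtype.val hab))
    exact Set.finite_coe_iff.mp this


variable {X : Type*} [MetricSpace X]
variable {c0 C0 δ : ℝ} {A : ℤ → Type*} {z : ∀ k : ℤ, A k → X}

/-- evaluation of a point of the disjoint union of centers -/
def zp (z : ∀ k : ℤ, A k → X) (q : Σ k, A k) : X := z q.1 q.2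

variable (c0) in
/-- The parent map: prefers the (unique) very close coarser center if one exists. -/
def par (hdense : ∀ (k : ℤ) (x : X), ∃ α : A k, dist x (z k α) < C0 * δ ^ k)
    (q : Σ k, A k) : Σ k, A k :=
  if h : ∃ α : A (q.1 - 1), dist (z q.1 q.2) (z (q.1 - 1) α) < c0 / 2 * δ ^ (q.1 - 1)
  then ⟨q.1 - 1, h.choose⟩
  else ⟨q.1 - 1, (hdense (q.1 - 1) (z q.1 q.2)).choose⟩

variable (hdense : ∀ (k : ℤ) (x : X), ∃ α : A k, dist x (z k α) < C0 * δ ^ k)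

lemma par_fst (q : Σ k, A k) : (par c0 hdense q).1 = q.1 - 1 := by
  unfold par; split <;> rfl

lemma par_dist (hc0 : 0 < c0) (hc0C0 : c0 ≤ C0) (hδ0 : 0 < δ) (q : Σ k, A k) :
    dist (zp z q) (zp z (par c0 hdense q)) < C0 * δ ^ (q.1 - 1) := by
  unfold par
  split
  · next h =>
    have := h.choose_spec
    have hp : (0:ℝ) < δ ^ (q.1 - 1) := zpow_pos hδ0 _
    calc dist (zp z q) (zp z ⟨q.1 - 1, h.choose⟩) = dist (z q.1 q.2) (z (q.1-1) h.choose) := rfl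
    _ < c0 / 2 * δ ^ (q.1 - 1) := this
    _ ≤ C0 * δ ^ (q.1 - 1) := by nlinarith
  · exact (hdense (q.1 - 1) (z q.1 q.2)).choose_spec

lemma par_eq (hc0 : 0 < c0) (hδ0 : 0 < δ)
    (hsep : ∀ (k : ℤ) (α β : A k), α ≠ β → c0 * δ ^ k ≤ dist (z k α) (z k β))
    (k : ℤ) (β : A (k + 1)) (α : A k)
    (h : dist (z (k+1) β) (z k α) < c0 / 2 * δ ^ k) :
    par c0 hdense ⟨k+1, β⟩ = ⟨k, α⟩ := by
  unfold par
  have e : (k + 1 : ℤ) - 1 = k := add_sub_cancel_right k 1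
  show (if h : ∃ α' : A ((k+1) - 1), dist (z (k+1) β) (z ((k+1) - 1) α') < c0 / 2 * δ ^ ((k+1) - 1)
    then (⟨(k+1) - 1, h.choose⟩ : Σ k, A k)
    else ⟨(k+1) - 1, (hdense ((k+1) - 1) (z (k+1) β)).choose⟩) = ⟨k, α⟩
  rw [e]
  have hex : ∃ α' : A k, dist (z (k+1) β) (z k α') < c0 / 2 * δ ^ k := ⟨α, h⟩
  rw [dif_pos hex]
  have hspec := hex.choose_spec
  have : hex.choose = α := by
    by_contra hne
    have h1 := hsep k hex.choose α hne
    have h2 : dist (z k hex.choose) (z k α) ≤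
        dist (z k hex.choose) (z (k+1) β) + dist (z (k+1) β) (z k α) := dist_triangle _ _ _
    rw [dist_comm (z k hex.choose) (z (k+1) β)] at h2
    have hp : (0:ℝ) < δ ^ k := zpow_pos hδ0 _
    linarith
  rw [this]

lemma par_mem (hc0 : 0 < c0) (hc0C0 : c0 ≤ C0) (hδ0 : 0 < δ) (hδ1 : δ < 1)
    (h12 : 12 * C0 * δ ≤ c0) (x : X) (q : Σ k, A k)
    (hq : dist x (zp z q) < 2 * C0 * δ ^ q.1) :
    dist x (zp z (par c0 hdense q)) < 2 * C0 * δ ^ (q.1 - 1) := by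
  have hC0 : 0 < C0 := lt_of_lt_of_le hc0 hc0C0
  have hp : (0:ℝ) < δ ^ (q.1 - 1) := zpow_pos hδ0 _
  have hsplit : δ ^ q.1 = δ ^ (q.1 - 1) * δ := by
    rw [← zpow_add_one₀ (ne_of_gt hδ0), sub_add_cancel]
  have h1 := par_dist hdense hc0 hc0C0 hδ0 q
  have h2 : dist x (zp z (par c0 hdense q)) ≤
      dist x (zp z q) + dist (zp z q) (zp z (par c0 hdense q)) := dist_triangle _ _ _
  rw [hsplit] at hq
  nlinarith

lemma parIter_mem (hc0 : 0 < c0) (hc0C0 : c0 ≤ C0) (hδ0 : 0 < δ) (hδ1 : δ < 1)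
    (h12 : 12 * C0 * δ ≤ c0) (x : X) : ∀ (n : ℕ) (q : Σ k, A k),
    dist x (zp z q) < 2 * C0 * δ ^ q.1 →
    ((par c0 hdense)^[n] q).1 = q.1 - n ∧
      dist x (zp z ((par c0 hdense)^[n] q)) < 2 * C0 * δ ^ (q.1 - n) := by
  intro n
  induction n with
  | zero => intro q hq; simpa using hq
  | succ n ih =>
    intro q hq
    rw [Function.iterate_succ_apply']
    obtain ⟨ih1, ih2⟩ := ih q hq
    have h1 := par_fst (c0 := c0) hdense ((par c0 hdense)^[n] q)
    have ih2' : dist x (zp z ((par c0 hdense)^[n] q)) <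
        2 * C0 * δ ^ (((par c0 hdense)^[n] q).1) := by rw [ih1]; exact ih2
    have h2 := par_mem hdense hc0 hc0C0 hδ0 hδ1 h12 x ((par c0 hdense)^[n] q) ih2'
    rw [ih1] at h1 h2
    have e : q.1 - (n:ℤ) - 1 = q.1 - ((n+1 : ℕ) : ℤ) := by push_cast; ring
    rw [e] at h1 h2
    exact ⟨h1, h2⟩

open CategoryTheory in
lemma exists_chain (hX : IsDoublingSpace X) (hc0 : 0 < c0) (hc0C0 : c0 ≤ C0)
    (hδ0 : 0 < δ) (hδ1 : δ < 1) (h12 : 12 * C0 * δ ≤ c0)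
    (hsep : ∀ (k : ℤ) (α β : A k), α ≠ β → c0 * δ ^ k ≤ dist (z k α) (z k β))
    (x : X) : ∃ c : ℤ → Σ k, A k,
      (∀ k, (c k).1 = k) ∧ (∀ k, dist x (zp z (c k)) < 2 * C0 * δ ^ k) ∧
      (∀ k, par c0 hdense (c (k+1)) = c k) := by
  have hC0 : 0 < C0 := lt_of_lt_of_le hc0 hc0C0
  let F : ℤᵒᵖ ⥤ Type _ :=
  { obj := fun j => {q : Σ k, A k // q.1 = j.unop ∧ dist x (zp z q) < 2 * C0 * δ ^ j.unop}
    map := fun {j k} f => TypeCat.ofHom fun q => ⟨(par c0 hdense)^[(j.unop - k.unop).toNat] q.1, by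
      have hle : k.unop ≤ j.unop := leOfHom f.unop
      obtain ⟨hq1, hq2⟩ := q.2
      have hq2' : dist x (zp z q.1) < 2 * C0 * δ ^ q.1.1 := by rw [hq1]; exact hq2
      obtain ⟨h1, h2⟩ := parIter_mem hdense hc0 hc0C0 hδ0 hδ1 h12 x
        ((j.unop - k.unop).toNat) q.1 hq2'
      have e : q.1.1 - ((j.unop - k.unop).toNat : ℤ) = k.unop := by
        rw [hq1]; omega
      rw [e] at h1 h2
      exact ⟨h1, h2⟩⟩
    map_id := by
      intro j
      ext q : 3
      apply Subtype.ext
      simp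
    map_comp := by
      intro j k l f g
      ext q : 3
      apply Subtype.ext
      have h1 : k.unop ≤ j.unop := leOfHom f.unop
      have h2 : l.unop ≤ k.unop := leOfHom g.unop
      have e : (j.unop - l.unop).toNat = (k.unop - l.unop).toNat + (j.unop - k.unop).toNat := by
        omega
      show (par c0 hdense)^[(j.unop - l.unop).toNat] q.1 =
        (par c0 hdense)^[(k.unop - l.unop).toNat] ((par c0 hdense)^[(j.unop - k.unop).toNat] q.1)
      rw [e, Function.iterate_add_apply] }
  haveI : ∀ j : ℤᵒᵖ, Nonempty (F.obj j) := by
    intro j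
    obtain ⟨α, hα⟩ := hdense j.unop x
    refine ⟨⟨⟨j.unop, α⟩, rfl, ?_⟩⟩
    have hp : (0:ℝ) < δ ^ j.unop := zpow_pos hδ0 _
    have : dist x (zp z ⟨j.unop, α⟩) = dist x (z j.unop α) := rfl
    rw [this]
    nlinarith
  haveI : ∀ j : ℤᵒᵖ, Finite (F.obj j) := by
    intro j
    set T : Set (Σ k, A k) :=
      {q | q.1 = j.unop ∧ dist x (zp z q) < 2 * C0 * δ ^ j.unop} with hT
    have hTfin : T.Finite := by
      have hp : (0:ℝ) < δ ^ j.unop := zpow_pos hδ0 _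
      have himg : (zp z '' T).Finite := by
        apply finite_separated hX (R := c0 * δ ^ j.unop) (by positivity) x (2 * C0 * δ ^ j.unop)
        · rintro y ⟨q, ⟨hq1, hq2⟩, rfl⟩
          rw [mem_ball, dist_comm]
          exact hq2
        · rintro y ⟨q, ⟨hq1, hq2⟩, rfl⟩ y' ⟨q', ⟨hq1', hq2'⟩, rfl⟩ hne
          obtain ⟨k1, α1⟩ := q
          obtain ⟨k2, α2⟩ := q'
          dsimp at hq1 hq1'
          subst hq1; subst hq1'
          have hα : α1 ≠ α2 := by
            rintro rfl; exact hne rfl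
          exact hsep j.unop α1 α2 hα
      have hinj : Set.InjOn (zp z) T := by
        rintro ⟨k1, α1⟩ ⟨hq1, -⟩ ⟨k2, α2⟩ ⟨hq1', -⟩ heq
        dsimp at hq1 hq1'
        subst hq1; subst hq1'
        by_contra hne
        have hα : α1 ≠ α2 := by
          intro h; exact hne (by rw [h])
        have := hsep j.unop α1 α2 hα
        rw [show zp z ⟨j.unop, α1⟩ = z j.unop α1 from rfl,
          show zp z ⟨j.unop, α2⟩ = z j.unop α2 from rfl] at heq
        rw [heq, dist_self] at this
        have hp : (0:ℝ) < δ ^ j.unop := zpow_pos hδ0 _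
        nlinarith
      exact Set.Finite.of_finite_image himg hinj
    exact hTfin.to_subtype
  obtain ⟨u, hu⟩ := nonempty_sections_of_finite_inverse_system F
  refine ⟨fun k => (u (Opposite.op k)).1, fun k => (u (Opposite.op k)).2.1,
    fun k => (u (Opposite.op k)).2.2, ?_⟩
  intro k
  have hle : k ≤ k + 1 := by omega
  have f : Opposite.op (k+1) ⟶ Opposite.op k := (homOfLE hle).op
  have h := hu f
  have h' := congrArg Subtype.val h
  have e : ((k+1 : ℤ) - k).toNat = 1 := by omega
  rw [show (F.map f (u (Opposite.op (k+1)))).1 =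
    (par c0 hdense)^[((k+1 : ℤ) - k).toNat] (u (Opposite.op (k+1))).1 from rfl] at h'
  rw [e, Function.iterate_one] at h'
  exact h'

end HK


/-- The Hytönen–Kairema dyadic cube construction in a doubling metric
space. -/
theorem statement14
    {X : Type*} [MetricSpace X] (hX : IsDoublingSpace X)
    (c0 C0 δ : ℝ) (hc0 : 0 < c0) (hc0C0 : c0 ≤ C0) (hδ0 : 0 < δ) (hδ1 : δ < 1)
    (h12 : 12 * C0 * δ ≤ c0)
    (A : ℤ → Type*) (z : ∀ k : ℤ, A k → X)
    (hsep : ∀ (k : ℤ) (α β : A k), α ≠ β → c0 * δ ^ k ≤ dist (z k α) (z k β))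
    (hdense : ∀ (k : ℤ) (x : X), ∃ α : A k, dist x (z k α) < C0 * δ ^ k) :
    ∃ Q : ∀ k : ℤ, A k → Set X,
      (∀ k : ℤ, (⋃ α : A k, Q k α) = Set.univ ∧
        Pairwise fun α β : A k => Q k α ∩ Q k β = ∅) ∧
      (∀ k l : ℤ, k ≤ l → ∀ (α : A k) (β : A l), Q l β ⊆ Q k α ∨ Q k α ∩ Q l β = ∅) ∧
      (∀ (k : ℤ) (α : A k),
        Metric.ball (z k α) ((c0 / 3) * δ ^ k) ⊆ Q k α ∧
        Q k α ⊆ Metric.ball (z k α) ((2 * C0) * δ ^ k)) := by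
  classical
  have hC0 : 0 < C0 := lt_of_lt_of_le hc0 hc0C0
  choose c h1 h2 h3 using fun x : X =>
    HK.exists_chain hdense hX hc0 hc0C0 hδ0 hδ1 h12 hsep x
  refine ⟨fun k α => {x | c x k = ⟨k, α⟩}, ?_, ?_, ?_⟩
  · intro k
    constructor
    · ext x
      simp only [Set.mem_iUnion, Set.mem_setOf_eq, Set.mem_univ, iff_true]
      rcases hq : c x k with ⟨k', β⟩
      have hk' : k' = k := by have := h1 x k; rw [hq] at this; exact this
      subst hk'
      exact ⟨β, rfl⟩
    · intro α β hne
      ext y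
      simp only [Set.mem_inter_iff, Set.mem_setOf_eq, Set.mem_empty_iff_false, iff_false,
        not_and]
      intro ha hb
      rw [ha] at hb
      exact hne (eq_of_heq (Sigma.mk.inj_iff.mp hb).2)
  · intro k l hkl α β
    set n := (l - k).toNat with hn
    have hln : l = k + (n : ℤ) := by omega
    have key : ∀ x : X, (HK.par c0 hdense)^[n] (c x l) = c x k := by
      intro x
      have haux : ∀ m : ℕ, (HK.par c0 hdense)^[m] (c x (k + (m : ℤ))) = c x k := by
        intro m
        induction m with
        | zero => simp
        | succ m ih =>
          rw [Function.iterate_succ_apply]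
          have e : (k + ((m + 1 : ℕ) : ℤ)) = (k + (m : ℤ)) + 1 := by push_cast; ring
          rw [e, h3 x (k + (m : ℤ))]
          exact ih
      have := haux n
      rwa [← hln] at this
    by_cases hpb : (HK.par c0 hdense)^[n] ⟨l, β⟩ = (⟨k, α⟩ : Σ m, A m)
    · left
      intro x hx
      have hx' : c x l = ⟨l, β⟩ := hx
      show c x k = ⟨k, α⟩
      rw [← key x, hx', hpb]
    · right
      ext y
      simp only [Set.mem_inter_iff, Set.mem_setOf_eq, Set.mem_empty_iff_false, iff_false,
        not_and]
      intro ha hb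
      exact absurd (by rw [← hb, key y, ha] : (HK.par c0 hdense)^[n] ⟨l, β⟩ =
        (⟨k, α⟩ : Σ m, A m)) hpb
  · intro k α
    constructor
    · intro x hx
      rw [mem_ball] at hx
      show c x k = ⟨k, α⟩
      rw [← h3 x k]
      rcases hq : c x (k + 1) with ⟨k', β⟩
      have hk' : k' = k + 1 := by have := h1 x (k + 1); rw [hq] at this; exact this
      subst hk'
      apply HK.par_eq hdense hc0 hδ0 hsep k β α
      have hd : dist x (z (k + 1) β) < 2 * C0 * δ ^ (k + 1) := by
        have := h2 x (k + 1); rw [hq] at this; exact this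
      have tri : dist (z (k + 1) β) (z k α) ≤ dist (z (k + 1) β) x + dist x (z k α) :=
        dist_triangle _ _ _
      rw [dist_comm (z (k + 1) β) x] at tri
      have hsplit : δ ^ (k + 1) = δ ^ k * δ := zpow_add_one₀ (ne_of_gt hδ0) k
      have hp : (0 : ℝ) < δ ^ k := zpow_pos hδ0 k
      have h12' : 12 * C0 * δ * δ ^ k ≤ c0 * δ ^ k :=
        mul_le_mul_of_nonneg_right h12 hp.le
      rw [hsplit] at hd
      nlinarith
    · intro x hx
      have hd : dist x (z k α) < 2 * C0 * δ ^ k := by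
        have := h2 x k
        rw [show c x k = ⟨k, α⟩ from hx] at this
        exact this
      rw [mem_ball]
      linarith [hd]
end
end
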